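/- arXiv:2111.11334 — 4 statements merged into one kernel-verified Lean document; each statement's English description precedes it below -/
import Mathlib

section
/- Let f : ℝ → ℝ be continuous with F(u) = ∫₀ᵘ f(s) ds, σ > 0, γ > 2, and suppose |u·f(u)| ≤ γ·|F(u) − σ| for all u, with F(ũ) − σ ≠ 0 for some fixed ũ ≠ 0. Then there exists A > 0 such that |F(u) − σ| ≤ A·|u|^γ for all u with |u| ≥ |ũ| (of the same sign as ũ); in particular one may take A = |F(ũ) − σ|/|ũ|^γ. -/
/-! If `|u g'(u)| ≤ γ |g(u)|`, then `u ↦ g(u) u^{-γ}` has derivative `(u g' - γ g) u^{-γ-1}`,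
whose product with `g` is nonpositive. Hence its square, and so `|g(u)| / u^γ`, is
nonincreasing on `(0, ∞)`; apply this to `g = F - σ`, whose derivative is `f`. -/

open Set

section GrowthBound

variable {g g' : ℝ → ℝ} {γ : ℝ}

theorem hasDerivAt_mul_rpow_neg {y u : ℝ} (hg : HasDerivAt g y u) (hu : 0 < u) :
    HasDerivAt (fun x => g x * x ^ (-γ)) ((u * y - γ * g u) * u ^ (-γ - 1)) u := by
  have hpow : u ^ (-γ) = u * u ^ (-γ - 1) := by
    simpa using Real.rpow_add hu 1 (-γ - 1)
  exact (hg.mul (Real.hasDerivAt_rpow_const (Or.inl hu.ne'))).congr_deriv (by rw [hpow]; ring)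

theorem antitoneOn_sq_mul_rpow_neg (hg : ∀ u, 0 < u → HasDerivAt g (g' u) u)
    (hgrowth : ∀ u, 0 < u → |u * g' u| ≤ γ * |g u|) :
    AntitoneOn (fun u => (g u * u ^ (-γ)) ^ 2) (Ioi 0) := by
  have hderiv : ∀ u ∈ Ioi (0 : ℝ), HasDerivAt (fun x => (g x * x ^ (-γ)) ^ 2)
      (2 * (g u * u ^ (-γ)) * ((u * g' u - γ * g u) * u ^ (-γ - 1))) u := by
    intro u hu
    exact ((hasDerivAt_mul_rpow_neg (hg u hu) hu).pow 2).congr_deriv (by push_cast; ring)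
  refine antitoneOn_of_hasDerivWithinAt_nonpos (convex_Ioi 0)
    (fun u hu => (hderiv u hu).continuousAt.continuousWithinAt)
    (fun u hu => (hderiv u (interior_subset hu)).hasDerivWithinAt) fun u hu => ?_
  rw [interior_Ioi] at hu
  have hcross : g u * (u * g' u) ≤ γ * g u ^ 2 :=
    calc g u * (u * g' u) ≤ |g u| * |u * g' u| := by rw [← abs_mul]; exact le_abs_self _
      _ ≤ |g u| * (γ * |g u|) := by gcongr; exact hgrowth u hu
      _ = γ * g u ^ 2 := by rw [← sq_abs (g u)]; ring
  have hpos : 0 < u ^ (-γ) * u ^ (-γ - 1) :=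
    mul_pos (Real.rpow_pos_of_pos hu _) (Real.rpow_pos_of_pos hu _)
  have hfactor : 2 * (g u * u ^ (-γ)) * ((u * g' u - γ * g u) * u ^ (-γ - 1))
      = 2 * (u ^ (-γ) * u ^ (-γ - 1)) * (g u * (u * g' u) - γ * g u ^ 2) := by ring
  rw [hfactor]
  exact mul_nonpos_of_nonneg_of_nonpos (by linarith) (by linarith)

theorem abs_le_mul_rpow_of_abs_mul_deriv_le (hg : ∀ u, 0 < u → HasDerivAt g (g' u) u)
    (hgrowth : ∀ u, 0 < u → |u * g' u| ≤ γ * |g u|) {a u : ℝ} (ha : 0 < a) (hau : a ≤ u) :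
    |g u| ≤ |g a| / a ^ γ * u ^ γ := by
  have hu : 0 < u := ha.trans_le hau
  have hsq := antitoneOn_sq_mul_rpow_neg hg hgrowth ha (hu : u ∈ Ioi 0) hau
  have habs : |g u * u ^ (-γ)| ≤ |g a * a ^ (-γ)| := sq_le_sq.mp hsq
  rwa [abs_mul, abs_mul, abs_of_pos (Real.rpow_pos_of_pos hu _),
    abs_of_pos (Real.rpow_pos_of_pos ha _), Real.rpow_neg hu.le, Real.rpow_neg ha.le,
    ← div_eq_mul_inv, ← div_eq_mul_inv, div_le_iff₀ (Real.rpow_pos_of_pos hu _)] at habs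

end GrowthBound

theorem stmt_4_general (f F : ℝ → ℝ) (σ γ utld : ℝ)
    (hf : Continuous f)
    (hF : ∀ u : ℝ, F u = ∫ s in (0:ℝ)..u, f s)
    (hgrowth : ∀ u : ℝ, |u * f u| ≤ γ * |F u - σ|)
    (hutld : 0 < utld) (hne : F utld ≠ σ) :
    ∃ A : ℝ, 0 < A ∧ A = |F utld - σ| / utld ^ γ ∧
      ∀ u : ℝ, utld ≤ u → |F u - σ| ≤ A * u ^ γ := by
  have hderiv : ∀ u, 0 < u → HasDerivAt (fun x => F x - σ) (f u) u := fun u _ => by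
    rw [funext hF]
    exact (hf.integral_hasStrictDerivAt 0 u).hasDerivAt.sub_const σ
  refine ⟨_, ?_, rfl, fun u hu =>
    abs_le_mul_rpow_of_abs_mul_deriv_le hderiv (fun u _ => hgrowth u) hutld hu⟩
  have : 0 < |F utld - σ| := abs_pos.mpr (sub_ne_zero.mpr hne)
  positivity

theorem stmt_4 (f F : ℝ → ℝ) (σ γ utld : ℝ)
    (hf : Continuous f)
    (hF : ∀ u : ℝ, F u = ∫ s in (0:ℝ)..u, f s)
    (hσ : 0 < σ) (hγ : 2 < γ)
    (hgrowth : ∀ u : ℝ, |u * f u| ≤ γ * |F u - σ|)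
    (hutld : 0 < utld) (hne : F utld ≠ σ) :
    ∃ A : ℝ, 0 < A ∧ A = |F utld - σ| / utld ^ γ ∧
      ∀ u : ℝ, utld ≤ u → |F u - σ| ≤ A * u ^ γ :=
  stmt_4_general f F σ γ utld hf hF hgrowth hutld hne
end

section
/- Let f : ℝ → ℝ be differentiable with u·(u·f'(u) − f(u)) > 0 for all u ≠ 0. Fix u : Ω → ℝ measurable with u ≠ 0 on a set of positive measure, and define φ(ε) = (1/ε)·∫_Ω u(x)·f(ε·u(x)) dx for ε > 0 (assuming all integrals exist). Then φ is strictly increasing on (0,∞). -/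
/-!
For fixed `v ≠ 0`, the derivative of `ε ↦ ε⁻¹ * (v * f (ε * v))` is
`ε⁻³ * w * (w * f' w - f w)` with `w = ε * v`, which is positive by hypothesis. So the integrand
of `φ` increases pointwise in `ε`, strictly wherever `u ≠ 0`, and a set of positive measure
makes the increase of the integral strict.
-/

open MeasureTheory Set

theorem MeasureTheory.integral_lt_integral_of_ae_le_of_measure_setOf_lt_ne_zero
    {α : Type*} [MeasurableSpace α] {μ : Measure α} {f g : α → ℝ}
    (hf : Integrable f μ) (hg : Integrable g μ) (hle : f ≤ᵐ[μ] g)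
    (hlt : μ {x | f x < g x} ≠ 0) :
    ∫ x, f x ∂μ < ∫ x, g x ∂μ := by
  rw [← sub_pos, ← integral_sub hg hf, integral_pos_iff_support_of_nonneg_ae
    (hle.mono fun x => sub_nonneg.2) (hg.sub hf)]
  refine pos_iff_ne_zero.2 (mt (measure_mono_null ?_) hlt)
  exact fun x hx => (sub_pos.2 hx).ne'

theorem strictMonoOn_inv_mul_mul_apply_mul {f : ℝ → ℝ} (hf : Differentiable ℝ f)
    (hpos : ∀ w : ℝ, w ≠ 0 → 0 < w * (w * deriv f w - f w)) {v : ℝ} (hv : v ≠ 0) :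
    StrictMonoOn (fun ε : ℝ => ε⁻¹ * (v * f (ε * v))) (Ioi 0) := by
  have hderiv : ∀ ε : ℝ, ε ≠ 0 → HasDerivAt (fun ε : ℝ => ε⁻¹ * (v * f (ε * v)))
      ((ε ^ 3)⁻¹ * (ε * v * (ε * v * deriv f (ε * v) - f (ε * v)))) ε := by
    intro ε hε
    have hinner : HasDerivAt (fun ε : ℝ => v * f (ε * v)) (v * (deriv f (ε * v) * v)) ε :=
      ((hf (ε * v)).hasDerivAt.comp ε (hasDerivAt_mul_const v)).const_mul v
    refine ((hasDerivAt_inv hε).mul hinner).congr_deriv ?_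
    field_simp
    ring
  refine strictMonoOn_of_hasDerivWithinAt_pos (convex_Ioi 0)
    (fun ε hε => (hderiv ε (ne_of_gt hε)).continuousAt.continuousWithinAt)
    (fun ε hε => (hderiv ε ?_).hasDerivWithinAt) (fun ε hε => ?_)
  all_goals rw [interior_Ioi] at hε
  · exact ne_of_gt hε
  · exact mul_pos (inv_pos.2 (pow_pos hε 3)) (hpos _ (mul_ne_zero (ne_of_gt hε) hv))

theorem stmt_6_general {Ω : Type*} [MeasurableSpace Ω] (μ : Measure Ω)
    (f : ℝ → ℝ) (u : Ω → ℝ)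
    (hdiff : Differentiable ℝ f)
    (hcond : ∀ v : ℝ, v ≠ 0 → 0 < v * (v * deriv f v - f v))
    (hupos : 0 < μ {x | u x ≠ 0})
    (hint : ∀ ε : ℝ, 0 < ε → Integrable (fun x => u x * f (ε * u x)) μ) :
    StrictMonoOn (fun ε : ℝ => ε⁻¹ * ∫ x, u x * f (ε * u x) ∂μ) (Ioi (0:ℝ)) := by
  intro a ha b hb hab
  have hlt : ∀ x, u x ≠ 0 → a⁻¹ * (u x * f (a * u x)) < b⁻¹ * (u x * f (b * u x)) :=
    fun x hx => strictMonoOn_inv_mul_mul_apply_mul hdiff hcond hx ha hb hab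
  have hle : ∀ x, a⁻¹ * (u x * f (a * u x)) ≤ b⁻¹ * (u x * f (b * u x)) := fun x => by
    by_cases hx : u x = 0
    · simp [hx]
    · exact (hlt x hx).le
  simp only [← integral_const_mul]
  refine integral_lt_integral_of_ae_le_of_measure_setOf_lt_ne_zero
    ((hint a ha).const_mul _) ((hint b hb).const_mul _) (Filter.Eventually.of_forall hle) ?_
  exact (hupos.trans_le (measure_mono hlt)).ne'

theorem stmt_6 {Ω : Type*} [MeasurableSpace Ω] (μ : Measure Ω) [IsFiniteMeasure μ]
    (f : ℝ → ℝ) (u : Ω → ℝ)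
    (hdiff : Differentiable ℝ f)
    (hcond : ∀ v : ℝ, v ≠ 0 → 0 < v * (v * deriv f v - f v))
    (hu : AEMeasurable u μ)
    (hupos : 0 < μ {x | u x ≠ 0})
    (hint : ∀ ε : ℝ, 0 < ε → Integrable (fun x => u x * f (ε * u x)) μ) :
    StrictMonoOn (fun ε : ℝ => ε⁻¹ * ∫ x, u x * f (ε * u x) ∂μ) (Ioi (0:ℝ)) :=
  stmt_6_general μ f u hdiff hcond hupos hint
end

section
/- Let Ω ⊂ ℝⁿ be bounded with first Dirichlet eigenvalue λ₁ > 0, α > 2, β ≥ 0, σ > 0, and f with F(u) = ∫₀ᵘ f(s)ds satisfying α(F(u) − σ) ≤ u f(u) + β u². Let J(u) = ½‖∇u‖² − ∫_Ω(F(u) − σ), I_δ(u) = δ‖∇u‖² − ∫_Ω u f(u). Then for every u ∈ H¹₀(Ω) and 0 < δ < α/2 − β/λ₁: J(u) ≥ a(δ)‖∇u‖² + (1/α)I_δ(u), where a(δ) = ½ − δ/α − β/(λ₁α) > 0. In particular, if J(u) ≤ d and I_δ(u) > 0 then ‖∇u‖² < d/a(δ). -/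
/-!
Integrating `α (F(u) - σ) ≤ u f(u) + β u²` and bounding `∫ u²` by Poincaré gives
`α ∫ (F(u) - σ) ≤ ∫ u f(u) + (β / λ₁) ‖∇u‖²`, which rearranges to
`J(u) ≥ a(δ) ‖∇u‖² + I_δ(u) / α`. If moreover `J(u) ≤ d` and `I_δ(u) > 0`, then
`a(δ) ‖∇u‖² < d`, and `a(δ) > 0` exactly when `δ < α / 2 - β / λ₁`.
-/

open MeasureTheory

section Integral

variable {Ω : Type*} [MeasurableSpace Ω] (μ : Measure Ω) {f F : ℝ → ℝ} {u : Ω → ℝ}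
  {α β σ : ℝ}

theorem mul_integral_sub_le_of_forall_mul_sub_le
    (hcond : ∀ v : ℝ, α * (F v - σ) ≤ v * f v + β * v ^ 2)
    (hint1 : Integrable (fun x => F (u x) - σ) μ)
    (hint2 : Integrable (fun x => u x * f (u x)) μ)
    (hint3 : Integrable (fun x => (u x) ^ 2) μ) :
    α * ∫ x, (F (u x) - σ) ∂μ ≤ (∫ x, u x * f (u x) ∂μ) + β * ∫ x, (u x) ^ 2 ∂μ := by
  have h : ∫ x, α * (F (u x) - σ) ∂μ ≤ ∫ x, (u x * f (u x) + β * (u x) ^ 2) ∂μ :=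
    integral_mono (hint1.const_mul α) (hint2.add (hint3.const_mul β)) fun x => hcond (u x)
  rwa [integral_const_mul, integral_add hint2 (hint3.const_mul β), integral_const_mul] at h

theorem mul_integral_sub_le_of_poincare {lam g : ℝ} (hβ : 0 ≤ β)
    (hcond : ∀ v : ℝ, α * (F v - σ) ≤ v * f v + β * v ^ 2)
    (hpoinc : ∫ x, (u x) ^ 2 ∂μ ≤ g ^ 2 / lam)
    (hint1 : Integrable (fun x => F (u x) - σ) μ)
    (hint2 : Integrable (fun x => u x * f (u x)) μ)
    (hint3 : Integrable (fun x => (u x) ^ 2) μ) :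
    α * ∫ x, (F (u x) - σ) ∂μ ≤ (∫ x, u x * f (u x) ∂μ) + β * (g ^ 2 / lam) :=
  (mul_integral_sub_le_of_forall_mul_sub_le μ hcond hint1 hint2 hint3).trans
    (add_le_add_right (mul_le_mul_of_nonneg_left hpoinc hβ) _)

end Integral

section Coefficient

variable {α β lam δ : ℝ}

theorem energy_coeff_pos (hα : 0 < α) (hlam : 0 < lam) (hδ : δ < α / 2 - β / lam) :
    0 < 1 / 2 - δ / α - β / (lam * α) := by
  have h : 1 / 2 - δ / α - β / (lam * α) = (α / 2 - β / lam - δ) / α := by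
    field_simp
    ring
  rw [h]
  exact div_pos (by linarith) hα

theorem le_energy_of_mul_le {g P G : ℝ} (hα : 0 < α) (hlam : lam ≠ 0)
    (h : α * G ≤ P + β * (g ^ 2 / lam)) :
    (1 / 2 - δ / α - β / (lam * α)) * g ^ 2 + (1 / α) * (δ * g ^ 2 - P) ≤ g ^ 2 / 2 - G := by
  have hG : G ≤ (P + β * (g ^ 2 / lam)) / α := by
    rw [le_div_iff₀ hα]
    linarith
  have hexp : (1 / 2 - δ / α - β / (lam * α)) * g ^ 2 + (1 / α) * (δ * g ^ 2 - P)
      = g ^ 2 / 2 - (P + β * (g ^ 2 / lam)) / α := by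
    field_simp
    ring
  linarith

end Coefficient

theorem lt_div_of_add_mul_le {a b x I J d : ℝ} (ha : 0 < a) (hb : 0 < b)
    (hlow : a * x + b * I ≤ J) (hJ : J ≤ d) (hI : 0 < I) : x < d / a := by
  rw [lt_div_iff₀ ha]
  nlinarith [mul_pos hb hI]

theorem stmt_12_general {Ω : Type*} [MeasurableSpace Ω] (μ : Measure Ω)
    (f F : ℝ → ℝ) (u : Ω → ℝ) (α β σ lam1 δ g d : ℝ)
    (hα : 2 < α) (hβ : 0 ≤ β) (hlam1 : 0 < lam1)
    (hcond : ∀ v : ℝ, α * (F v - σ) ≤ v * f v + β * v ^ 2)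
    (hpoinc : ∫ x, (u x) ^ 2 ∂μ ≤ g ^ 2 / lam1)
    (hint1 : Integrable (fun x => F (u x) - σ) μ)
    (hint2 : Integrable (fun x => u x * f (u x)) μ)
    (hint3 : Integrable (fun x => (u x) ^ 2) μ)
    (hδ2 : δ < α / 2 - β / lam1) :
    (1 / 2 - δ / α - β / (lam1 * α)) * g ^ 2
        + (1 / α) * (δ * g ^ 2 - ∫ x, u x * f (u x) ∂μ)
      ≤ g ^ 2 / 2 - (∫ x, (F (u x) - σ) ∂μ) ∧
    (g ^ 2 / 2 - (∫ x, (F (u x) - σ) ∂μ) ≤ d →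
      0 < δ * g ^ 2 - (∫ x, u x * f (u x) ∂μ) →
      g ^ 2 < d / (1 / 2 - δ / α - β / (lam1 * α))) := by
  have hα0 : 0 < α := by linarith
  have hlow := le_energy_of_mul_le (δ := δ) hα0 hlam1.ne'
    (mul_integral_sub_le_of_poincare μ hβ hcond hpoinc hint1 hint2 hint3)
  exact ⟨hlow, fun hJ hI =>
    lt_div_of_add_mul_le (energy_coeff_pos hα0 hlam1 hδ2) (one_div_pos.mpr hα0) hlow hJ hI⟩

/-- `g` stands for the gradient norm `‖∇u‖_{L²}`; the Poincaré inequality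
`‖u‖² ≤ λ₁⁻¹ ‖∇u‖²` is encoded as `∫ u² ≤ g²/λ₁`. -/
theorem stmt_12 {Ω : Type*} [MeasurableSpace Ω] (μ : Measure Ω) [IsFiniteMeasure μ]
    (f F : ℝ → ℝ) (u : Ω → ℝ) (α β σ lam1 δ g d : ℝ)
    (hα : 2 < α) (hβ : 0 ≤ β) (hσ : 0 < σ) (hlam1 : 0 < lam1)
    (hbl : 2 * β < lam1 * (α - 2))
    (hcond : ∀ v : ℝ, α * (F v - σ) ≤ v * f v + β * v ^ 2)
    (hg0 : 0 ≤ g)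
    (hpoinc : ∫ x, (u x) ^ 2 ∂μ ≤ g ^ 2 / lam1)
    (hint1 : Integrable (fun x => F (u x) - σ) μ)
    (hint2 : Integrable (fun x => u x * f (u x)) μ)
    (hint3 : Integrable (fun x => (u x) ^ 2) μ)
    (hδ : 0 < δ) (hδ2 : δ < α / 2 - β / lam1)
    (hd : 0 < d) :
    (1 / 2 - δ / α - β / (lam1 * α)) * g ^ 2
        + (1 / α) * (δ * g ^ 2 - ∫ x, u x * f (u x) ∂μ)
      ≤ g ^ 2 / 2 - (∫ x, (F (u x) - σ) ∂μ) ∧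
    (g ^ 2 / 2 - (∫ x, (F (u x) - σ) ∂μ) ≤ d →
      0 < δ * g ^ 2 - (∫ x, u x * f (u x) ∂μ) →
      g ^ 2 < d / (1 / 2 - δ / α - β / (lam1 * α))) :=
  stmt_12_general μ f F u α β σ lam1 δ g d hα hβ hlam1 hcond hpoinc hint1 hint2 hint3 hδ2
end

section
/- Let F : ℝ → ℝ with F(u) = u^{2+ε}h(u) + au² + b for u > 0, where h is nondecreasing on (0,∞), ε > 0, b ≥ 0, 0 < a < λ₁/2, and suppose f = F' satisfies u f(u) ≥ λ u² for u > 0 with λ > λ₁ > 0. Then there exist m > 1 and μ > 0 such that u f(u) ≥ μ u^{2+ε} for all u ≥ m. -/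
/-!
Write `F u = u ^ (2 + ε) * h u + a * u ^ 2 + b`. Freezing `h` at its value at `u` gives a
function that touches `F` at `u` and, `h` being nondecreasing, lies below `F` to the right of
`u`; comparing right derivatives yields `u * f u ≥ (2 + ε) * h u * u ^ (2 + ε) + 2 * a * u ^ 2`.
It remains to see that `h` is eventually positive: `u * f u ≥ λ * u ^ 2` makes `F` grow at
least like `λ / 2 * u ^ 2`, while `h ≤ 0` would cap it by `a * u ^ 2 + b` with `a < λ / 2`.
-/

open Set Filter

theorem HasDerivAt.nonneg_of_le_right {g : ℝ → ℝ} {g' x : ℝ} (hg : HasDerivAt g g' x)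
    (hmin : ∀ y, x ≤ y → g x ≤ g y) : 0 ≤ g' := by
  have hloc : IsLocalMinOn g (Ici x) x := eventually_nhdsWithin_of_forall hmin
  have hcone : (1 : ℝ) ∈ posTangentConeAt (Ici x) x :=
    mem_posTangentConeAt_of_segment_subset (by
      rw [segment_eq_Icc (by linarith)]; exact Icc_subset_Ici_self)
  simpa using hloc.hasFDerivWithinAt_nonneg hg.hasFDerivAt.hasFDerivWithinAt hcone

theorem monotoneOn_sub_half_mul_sq {F f : ℝ → ℝ} {lam : ℝ}
    (hf : ∀ u : ℝ, 0 < u → HasDerivAt F (f u) u)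
    (hlow : ∀ u : ℝ, 0 < u → lam * u ^ 2 ≤ u * f u) :
    MonotoneOn (fun u => F u - lam / 2 * u ^ 2) (Ioi 0) := by
  have hderiv : ∀ u : ℝ, 0 < u →
      HasDerivAt (fun u => F u - lam / 2 * u ^ 2) (f u - lam * u) u := fun u hu =>
    ((hf u hu).sub ((hasDerivAt_pow 2 u).const_mul (lam / 2))).congr_deriv (by ring)
  refine monotoneOn_of_hasDerivWithinAt_nonneg (f' := fun u => f u - lam * u) (convex_Ioi 0)
      (fun u hu => (hderiv u hu).continuousAt.continuousWithinAt) ?_ ?_ <;> rw [interior_Ioi]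
  · exact fun u hu => (hderiv u hu).hasDerivWithinAt
  · intro u (hu : 0 < u)
    have : u * (lam * u) ≤ u * f u := by linarith [hlow u hu]
    linarith [le_of_mul_le_mul_left this hu]

section Representation

variable {f F h : ℝ → ℝ} {ε a b : ℝ}

theorem rpow_mul_add_le_mul_of_hasDerivAt
    (hmono : ∀ u v : ℝ, 0 < u → u ≤ v → h u ≤ h v)
    (hFrep : ∀ u : ℝ, 0 < u → F u = u ^ (2 + ε) * h u + a * u ^ 2 + b)
    {u : ℝ} (hu : 0 < u) (hf : HasDerivAt F (f u) u) :
    (2 + ε) * h u * u ^ (2 + ε) + 2 * a * u ^ 2 ≤ u * f u := by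
  set G : ℝ → ℝ := fun v => h u * v ^ (2 + ε) + a * v ^ 2 + b
  set G' : ℝ := (2 + ε) * h u * u ^ (1 + ε) + 2 * a * u
  have hG : HasDerivAt G G' u := by
    have hpow := (Real.hasDerivAt_rpow_const (p := 2 + ε) (Or.inl hu.ne')).const_mul (h u)
    exact ((hpow.add ((hasDerivAt_pow 2 u).const_mul a)).add_const b).congr_deriv
      (by rw [show (2 : ℝ) + ε - 1 = 1 + ε by ring]; ring)
  have hmin : ∀ v, u ≤ v → F u - G u ≤ F v - G v := by
    intro v hv
    have hv0 : 0 < v := hu.trans_le hv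
    have hgap : F v - G v = v ^ (2 + ε) * (h v - h u) := by simp only [G, hFrep v hv0]; ring
    rw [hgap, hFrep u hu]
    simp only [G]
    nlinarith [Real.rpow_nonneg hv0.le (2 + ε), hmono u v hu hv]
  have hG'_le : G' ≤ f u := sub_nonneg.mp ((hf.sub hG).nonneg_of_le_right hmin)
  have hsplit : u ^ (2 + ε) = u * u ^ (1 + ε) := by
    rw [show (2 : ℝ) + ε = 1 + (1 + ε) by ring, Real.rpow_add hu, Real.rpow_one]
  calc (2 + ε) * h u * u ^ (2 + ε) + 2 * a * u ^ 2 = u * G' := by rw [hsplit]; ring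
    _ ≤ u * f u := mul_le_mul_of_nonneg_left hG'_le hu.le

theorem exists_one_lt_pos_of_mul_sq_le {lam : ℝ} (hlam : a < lam / 2)
    (hFrep : ∀ u : ℝ, 0 < u → F u = u ^ (2 + ε) * h u + a * u ^ 2 + b)
    (hf : ∀ u : ℝ, 0 < u → HasDerivAt F (f u) u)
    (hlow : ∀ u : ℝ, 0 < u → lam * u ^ 2 ≤ u * f u) :
    ∃ u₀ : ℝ, 1 < u₀ ∧ 0 < h u₀ := by
  by_contra! hneg
  have htend : Tendsto (fun u : ℝ => (lam / 2 - a) * u ^ 2) atTop atTop :=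
    (tendsto_pow_atTop two_ne_zero).const_mul_atTop (by linarith)
  obtain ⟨u, hlarge, hu⟩ :=
    ((htend.eventually_gt_atTop (b + lam / 2 - F 1)).and (eventually_gt_atTop 1)).exists
  have hu0 : (0 : ℝ) < u := by linarith
  have hgrowth := monotoneOn_sub_half_mul_sq hf hlow (mem_Ioi.mpr one_pos) (mem_Ioi.mpr hu0) hu.le
  have hcap : F u ≤ a * u ^ 2 + b := by
    rw [hFrep u hu0]
    nlinarith [Real.rpow_nonneg hu0.le (2 + ε), hneg u hu]
  simp only [one_pow, mul_one] at hgrowth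
  linarith

end Representation

theorem stmt_15_general (f F : ℝ → ℝ) (h : ℝ → ℝ) (ε a b lam lam1 : ℝ)
    (hε : 0 < ε) (hlam : lam1 < lam)
    (ha0 : 0 < a) (ha : a < lam1 / 2)
    (hmono : ∀ u v : ℝ, 0 < u → u ≤ v → h u ≤ h v)
    (hFrep : ∀ u : ℝ, 0 < u → F u = u ^ (2 + ε) * h u + a * u ^ 2 + b)
    (hf : ∀ u : ℝ, 0 < u → HasDerivAt F (f u) u)
    (hlow : ∀ u : ℝ, 0 < u → lam * u ^ 2 ≤ u * f u) :
    ∃ m : ℝ, 1 < m ∧ ∃ μ : ℝ, 0 < μ ∧ ∀ u : ℝ, m ≤ u → μ * u ^ (2 + ε) ≤ u * f u := by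
  obtain ⟨u₀, hu₀, hpos⟩ := exists_one_lt_pos_of_mul_sq_le (by linarith) hFrep hf hlow
  refine ⟨u₀, hu₀, (2 + ε) * h u₀, by positivity, fun u hu => ?_⟩
  have hu0 : 0 < u := by linarith
  calc (2 + ε) * h u₀ * u ^ (2 + ε) ≤ (2 + ε) * h u * u ^ (2 + ε) := by
        gcongr
        exact hmono u₀ u (by linarith) hu
    _ ≤ (2 + ε) * h u * u ^ (2 + ε) + 2 * a * u ^ 2 := le_add_of_nonneg_right (by positivity)
    _ ≤ u * f u := rpow_mul_add_le_mul_of_hasDerivAt hmono hFrep hu0 (hf u hu0)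

theorem stmt_15 (f F : ℝ → ℝ) (h : ℝ → ℝ) (ε a b lam lam1 : ℝ)
    (hε : 0 < ε) (hlam1 : 0 < lam1) (hlam : lam1 < lam)
    (ha0 : 0 < a) (ha : a < lam1 / 2) (hb : 0 ≤ b)
    (hmono : ∀ u v : ℝ, 0 < u → u ≤ v → h u ≤ h v)
    (hFrep : ∀ u : ℝ, 0 < u → F u = u ^ (2 + ε) * h u + a * u ^ 2 + b)
    (hf : ∀ u : ℝ, 0 < u → HasDerivAt F (f u) u)
    (hlow : ∀ u : ℝ, 0 < u → lam * u ^ 2 ≤ u * f u) :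
    ∃ m : ℝ, 1 < m ∧ ∃ μ : ℝ, 0 < μ ∧ ∀ u : ℝ, m ≤ u → μ * u ^ (2 + ε) ≤ u * f u :=
  stmt_15_general f F h ε a b lam lam1 hε hlam ha0 ha hmono hFrep hf hlow
end
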